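/- arXiv:2311.10008 — 4 statements merged into one kernel-verified Lean document; each statement's English description precedes it below -/
import Mathlib

section
/- There is an absolute constant C > 0 such that for all real numbers X, Y, Z ≥ 1, the number of triples (k, ℓ, m) of positive integers satisfying k·ℓ ≤ X, k·m ≤ Y and ℓ·m ≤ Z is at most C·(X·Y·Z)^{1/2}. -/
/-!
Since `(kℓ)(km)(ℓm) ≤ XYZ`, every triple satisfies one of `X m² ≤ YZ`, `Z k² ≤ XY`,
`Y ℓ² ≤ ZX`, and a cyclic rotation of the coordinates reduces the last two cases to the first.
There `m ≤ M := √(YZ/X)`, and for fixed `m` the number of triples is at most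
`∑_{k ≤ Y/m} min (Z/m) (X/k)`. Bounding the minimum by `(Z/m)^(1/4) (X/k)^(3/4)` instead of
`X/k` avoids a logarithm: the sum becomes `≤ 4 X (M/m)^(1/2)`, and summing over `m ≤ M` gives
`8 X M = 8 √(XYZ)`.
-/

open Finset

lemma sum_Icc_one_div_rpow_le {p : ℝ} (hp0 : 0 < p) (hp1 : p ≤ 1) (n : ℕ) :
    ∑ k ∈ Icc 1 n, 1 / (k : ℝ) ^ (1 - p) ≤ (n : ℝ) ^ p / p := by
  induction n with
  | zero => simp [Real.zero_rpow hp0.ne']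
  | succ n ih =>
    rw [sum_Icc_succ_top (by omega), le_div_iff₀ hp0, add_mul]
    rw [le_div_iff₀ hp0] at ih
    set N : ℝ := ((n + 1 : ℕ) : ℝ)
    have hN : 0 < N := by positivity
    have bernoulli : (n : ℝ) ^ p ≤ N ^ p - p * (N ^ p / N) := by
      have hn : (n : ℝ) = N * (1 + -(1 / N)) := by field_simp; simp [N]
      have hs : -1 ≤ -(1 / N) := by
        rw [neg_le_neg_iff, div_le_one hN]; simp [N]
      calc (n : ℝ) ^ p = N ^ p * (1 + -(1 / N)) ^ p := by
            rw [hn, Real.mul_rpow hN.le (by linarith)]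
        _ ≤ N ^ p * (1 + p * -(1 / N)) := by
            gcongr; exact rpow_one_add_le_one_add_mul_self hs hp0.le hp1
        _ = N ^ p - p * (N ^ p / N) := by ring
    have hNp : N ^ p / N = 1 / N ^ (1 - p) := by
      rw [Real.rpow_sub hN, Real.rpow_one]; field_simp
    rw [hNp] at bernoulli
    linarith

lemma sum_Icc_floor_one_div_rpow_le {p x : ℝ} (hp0 : 0 < p) (hp1 : p ≤ 1) (hx : 0 ≤ x) :
    ∑ k ∈ Icc 1 ⌊x⌋₊, 1 / (k : ℝ) ^ (1 - p) ≤ x ^ p / p := by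
  refine (sum_Icc_one_div_rpow_le hp0 hp1 _).trans ?_
  gcongr
  exact Nat.floor_le hx

lemma min_le_rpow_mul_rpow {a b θ : ℝ} (ha : 0 ≤ a) (hb : 0 ≤ b) (hθ0 : 0 ≤ θ) (hθ1 : θ ≤ 1) :
    min a b ≤ a ^ θ * b ^ (1 - θ) := by
  have hmin : 0 ≤ min a b := le_min ha hb
  calc min a b = min a b ^ θ * min a b ^ (1 - θ) := by
        rw [← Real.rpow_add' hmin (by norm_num), add_sub_cancel, Real.rpow_one]
    _ ≤ a ^ θ * b ^ (1 - θ) := by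
        gcongr
        · exact min_le_left a b
        · exact min_le_right a b

lemma sum_Icc_floor_min_div_le {A B X θ : ℝ} (hA : 0 ≤ A) (hB : 0 ≤ B) (hX : 0 ≤ X)
    (hθ0 : 0 < θ) (hθ1 : θ ≤ 1) :
    ∑ k ∈ Icc 1 ⌊A⌋₊, min B (X / k) ≤ (A * B) ^ θ * X ^ (1 - θ) / θ := by
  calc ∑ k ∈ Icc 1 ⌊A⌋₊, min B (X / k)
      ≤ ∑ k ∈ Icc 1 ⌊A⌋₊, B ^ θ * X ^ (1 - θ) * (1 / (k : ℝ) ^ (1 - θ)) := by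
        gcongr with k
        refine (min_le_rpow_mul_rpow hB (by positivity) hθ0.le hθ1).trans_eq ?_
        rw [Real.div_rpow hX k.cast_nonneg]
        ring
    _ = B ^ θ * X ^ (1 - θ) * ∑ k ∈ Icc 1 ⌊A⌋₊, 1 / (k : ℝ) ^ (1 - θ) := by rw [mul_sum]
    _ ≤ B ^ θ * X ^ (1 - θ) * (A ^ θ / θ) := by
        gcongr; exact sum_Icc_floor_one_div_rpow_le hθ0 hθ1 hA
    _ = (A * B) ^ θ * X ^ (1 - θ) / θ := by rw [Real.mul_rpow hA hB]; ring

lemma sum_Icc_floor_sum_min_le {X Y Z : ℝ} (hX : 0 < X) (hY : 0 ≤ Y) (hZ : 0 ≤ Z) :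
    ∑ m ∈ Icc 1 ⌊√(Y * Z / X)⌋₊, ∑ k ∈ Icc 1 ⌊Y / m⌋₊, min (Z / m) (X / k) ≤
      8 * (X * Y * Z) ^ ((1 : ℝ) / 2) := by
  set M := √(Y * Z / X)
  have hM : 0 ≤ M := Real.sqrt_nonneg _
  have inner : ∀ m ∈ Icc 1 ⌊M⌋₊, ∑ k ∈ Icc 1 ⌊Y / m⌋₊, min (Z / m) (X / k) ≤
      4 * X * √M * (1 / (m : ℝ) ^ (1 - (1 : ℝ) / 2)) := by
    intro m hm
    have hm : (0 : ℝ) < m := by have := (mem_Icc.1 hm).1; positivity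
    have hYZ : Y / m * (Z / m) = X * (M / m) ^ 2 := by
      rw [div_pow, Real.sq_sqrt (by positivity)]; field_simp
    have hX' : X ^ ((1 : ℝ) / 4) * X ^ (1 - (1 : ℝ) / 4) = X := by
      rw [← Real.rpow_add hX]; norm_num
    refine (sum_Icc_floor_min_div_le (by positivity) (by positivity) hX.le
      (θ := 1 / 4) (by norm_num) (by norm_num)).trans_eq ?_
    rw [hYZ, Real.mul_rpow hX.le (by positivity), ← Real.rpow_natCast,
      ← Real.rpow_mul (by positivity), Real.div_rpow hM hm.le, Real.sqrt_eq_rpow,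
      show ((2 : ℕ) : ℝ) * (1 / 4) = 1 / 2 by norm_num, show (1 : ℝ) - 1 / 2 = 1 / 2 by norm_num]
    linear_combination (4 * M ^ ((1 : ℝ) / 2) / (m : ℝ) ^ ((1 : ℝ) / 2)) * hX'
  calc _ ≤ ∑ m ∈ Icc 1 ⌊M⌋₊, 4 * X * √M * (1 / (m : ℝ) ^ (1 - (1 : ℝ) / 2)) := sum_le_sum inner
    _ = 4 * X * √M * ∑ m ∈ Icc 1 ⌊M⌋₊, 1 / (m : ℝ) ^ (1 - (1 : ℝ) / 2) := by rw [mul_sum]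
    _ ≤ 4 * X * √M * (M ^ ((1 : ℝ) / 2) / (1 / 2)) := by
        gcongr; exact sum_Icc_floor_one_div_rpow_le (by norm_num) (by norm_num) hM
    _ = 8 * (X * M) := by
        rw [← Real.sqrt_eq_rpow]; linear_combination (8 * X) * Real.mul_self_sqrt hM
    _ = 8 * (X * Y * Z) ^ ((1 : ℝ) / 2) := by
        rw [← Real.sqrt_eq_rpow, ← Real.sqrt_sq hX.le, ← Real.sqrt_mul (sq_nonneg X),
          Real.sqrt_sq hX.le]
        congr 1
        field_simp

def productTriples (X Y Z : ℝ) : Set (ℕ × ℕ × ℕ) :=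
  {t | 0 < t.1 ∧ 0 < t.2.1 ∧ 0 < t.2.2 ∧ ((t.1 * t.2.1 : ℕ) : ℝ) ≤ X ∧
    ((t.1 * t.2.2 : ℕ) : ℝ) ≤ Y ∧ ((t.2.1 * t.2.2 : ℕ) : ℝ) ≤ Z}

def lowThirdTriples (X Y Z : ℝ) : Set (ℕ × ℕ × ℕ) :=
  {t ∈ productTriples X Y Z | X * (t.2.2 : ℝ) ^ 2 ≤ Y * Z}

def rotateTriple (t : ℕ × ℕ × ℕ) : ℕ × ℕ × ℕ := (t.2.1, t.2.2, t.1)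

lemma rotateTriple_injective : Function.Injective rotateTriple := by
  rintro ⟨k, l, m⟩ ⟨k', l', m'⟩ h
  simp_all [rotateTriple]

lemma range_rotateTriple : Set.range rotateTriple = Set.univ :=
  Set.range_eq_univ.2 fun ⟨l, m, k⟩ => ⟨(k, l, m), rfl⟩

lemma ncard_preimage_rotateTriple (s : Set (ℕ × ℕ × ℕ)) :
    (rotateTriple ⁻¹' s).ncard = s.ncard :=
  Set.ncard_preimage_of_injective_subset_range rotateTriple_injective
    (range_rotateTriple ▸ Set.subset_univ s)

lemma rotateTriple_mem_productTriples {X Y Z : ℝ} {t : ℕ × ℕ × ℕ} :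
    rotateTriple t ∈ productTriples Z X Y ↔ t ∈ productTriples X Y Z := by
  obtain ⟨k, l, m⟩ := t
  simp only [productTriples, rotateTriple, Set.mem_ofPred_eq, mul_comm m k, mul_comm l k]
  tauto

lemma sq_le_or_sq_le_or_sq_le_of_mem_productTriples {X Y Z : ℝ} {k l m : ℕ}
    (ht : (k, l, m) ∈ productTriples X Y Z) :
    X * (m : ℝ) ^ 2 ≤ Y * Z ∨ Z * (k : ℝ) ^ 2 ≤ X * Y ∨ Y * (l : ℝ) ^ 2 ≤ Z * X := by
  obtain ⟨hk, hl, hm, hkl, hkm, hlm⟩ := ht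
  push_cast at hkl hkm hlm
  have hk : (1 : ℝ) ≤ k := by exact_mod_cast hk
  have hl : (1 : ℝ) ≤ l := by exact_mod_cast hl
  have hm : (1 : ℝ) ≤ m := by exact_mod_cast hm
  have hX : 0 < X := by nlinarith
  have hY : 0 < Y := by nlinarith
  have hZ : 0 < Z := by nlinarith
  have hXYZ : (k * l) * (k * m) * (l * m : ℝ) ≤ X * Y * Z := by gcongr
  by_contra! h
  obtain ⟨h₁, h₂, h₃⟩ := h
  have : (Y * Z) * (X * Y) * (Z * X) < (X * m ^ 2) * (Z * k ^ 2) * (Y * l ^ 2) := by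
    gcongr
  nlinarith [mul_le_mul_of_nonneg_left hXYZ (by positivity : (0 : ℝ) ≤ X * Y * Z)]

lemma productTriples_eq_union (X Y Z : ℝ) :
    productTriples X Y Z = lowThirdTriples X Y Z ∪ rotateTriple ⁻¹' lowThirdTriples Z X Y ∪
      rotateTriple ⁻¹' (rotateTriple ⁻¹' lowThirdTriples Y Z X) := by
  ext ⟨k, l, m⟩
  simp only [lowThirdTriples, Set.mem_union, Set.mem_preimage, Set.mem_ofPred_eq,
    rotateTriple_mem_productTriples]
  constructor
  · intro ht
    simp only [rotateTriple]
    rcases sq_le_or_sq_le_or_sq_le_of_mem_productTriples ht with h | h | h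
    · exact Or.inl (Or.inl ⟨ht, h⟩)
    · exact Or.inl (Or.inr ⟨ht, h⟩)
    · exact Or.inr ⟨ht, h⟩
  · rintro ((h | h) | h) <;> exact h.1

lemma ncard_productTriples_le (X Y Z : ℝ) :
    (productTriples X Y Z).ncard ≤
      (lowThirdTriples X Y Z).ncard + (lowThirdTriples Z X Y).ncard +
        (lowThirdTriples Y Z X).ncard := by
  rw [productTriples_eq_union, ← ncard_preimage_rotateTriple (lowThirdTriples Z X Y),
    ← ncard_preimage_rotateTriple (lowThirdTriples Y Z X),
    ← ncard_preimage_rotateTriple (rotateTriple ⁻¹' lowThirdTriples Y Z X)]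
  exact (Set.ncard_union_le _ _).trans (by gcongr; exact Set.ncard_union_le _ _)

lemma lowThirdTriples_subset {X Y Z : ℝ} (hX : 0 < X) :
    lowThirdTriples X Y Z ⊆ ↑((Icc 1 ⌊√(Y * Z / X)⌋₊).biUnion fun m =>
      (Icc 1 ⌊Y / m⌋₊).biUnion fun k =>
        (Icc 1 ⌊min (Z / m) (X / k)⌋₊).image fun l => (k, l, m)) := by
  rintro ⟨k, l, m⟩ ⟨⟨hk, hl, hm, hkl, hkm, hlm⟩, hmZ⟩
  simp only at hk hl hm hkl hkm hlm hmZ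
  push_cast at hkl hkm hlm
  have hk : (0 : ℝ) < k := by exact_mod_cast hk
  have hm : (0 : ℝ) < m := by exact_mod_cast hm
  simp only [coe_biUnion, coe_Icc, coe_image, Set.mem_iUnion, Set.mem_Icc, Set.mem_image,
    Prod.mk.injEq, exists_prop]
  refine ⟨m, ⟨by omega, Nat.le_floor ?_⟩, k, ⟨by omega, Nat.le_floor ?_⟩, l,
    ⟨⟨by omega, Nat.le_floor (le_min ?_ ?_)⟩, rfl, rfl, rfl⟩⟩
  · exact Real.le_sqrt_of_sq_le (by rw [le_div_iff₀ hX]; linarith)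
  · rw [le_div_iff₀ hm]; exact hkm
  · rw [le_div_iff₀ hm]; exact hlm
  · rw [le_div_iff₀ hk]; linarith

lemma ncard_lowThirdTriples_le_sum {X Y Z : ℝ} (hX : 0 < X) (hZ : 0 ≤ Z) :
    ((lowThirdTriples X Y Z).ncard : ℝ) ≤
      ∑ m ∈ Icc 1 ⌊√(Y * Z / X)⌋₊, ∑ k ∈ Icc 1 ⌊Y / m⌋₊, min (Z / m) (X / k) := by
  calc ((lowThirdTriples X Y Z).ncard : ℝ)
      ≤ ∑ m ∈ Icc 1 ⌊√(Y * Z / X)⌋₊, ∑ k ∈ Icc 1 ⌊Y / m⌋₊, (⌊min (Z / m) (X / k)⌋₊ : ℝ) := by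
        refine (Nat.cast_le.2 ((Set.ncard_le_ncard (lowThirdTriples_subset hX)).trans_eq
          (Set.ncard_coe_finset _))).trans ?_
        norm_cast
        refine card_biUnion_le.trans (sum_le_sum fun m _ => card_biUnion_le.trans
          (sum_le_sum fun k _ => card_image_le.trans_eq ?_))
        simp
    _ ≤ _ := by gcongr; exact Nat.floor_le (by positivity)

lemma ncard_lowThirdTriples_le {X Y Z : ℝ} (hX : 0 < X) (hY : 0 ≤ Y) (hZ : 0 ≤ Z) :
    ((lowThirdTriples X Y Z).ncard : ℝ) ≤ 8 * (X * Y * Z) ^ ((1 : ℝ) / 2) :=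
  (ncard_lowThirdTriples_le_sum hX hZ).trans (sum_Icc_floor_sum_min_le hX hY hZ)

/-- There is an absolute constant `C > 0` such that for all reals
`X, Y, Z ≥ 1`, the number of triples of positive integers `(k, ℓ, m)` with
`kℓ ≤ X`, `km ≤ Y`, `ℓm ≤ Z` is at most `C·(XYZ)^{1/2}`. -/
theorem stmt_3 :
    ∃ C : ℝ, 0 < C ∧ ∀ X Y Z : ℝ, 1 ≤ X → 1 ≤ Y → 1 ≤ Z →
      (({t : ℕ × ℕ × ℕ | 0 < t.1 ∧ 0 < t.2.1 ∧ 0 < t.2.2 ∧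
          ((t.1 * t.2.1 : ℕ) : ℝ) ≤ X ∧ ((t.1 * t.2.2 : ℕ) : ℝ) ≤ Y ∧
          ((t.2.1 * t.2.2 : ℕ) : ℝ) ≤ Z}.ncard : ℝ)) ≤
        C * (X * Y * Z) ^ ((1 : ℝ) / 2) := by
  refine ⟨24, by norm_num, fun X Y Z hX hY hZ => ?_⟩
  have hX0 : (0 : ℝ) < X := by linarith
  have hY0 : (0 : ℝ) < Y := by linarith
  have hZ0 : (0 : ℝ) < Z := by linarith
  have h₁ := ncard_lowThirdTriples_le hX0 hY0.le hZ0.le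
  have h₂ := ncard_lowThirdTriples_le hZ0 hX0.le hY0.le
  have h₃ := ncard_lowThirdTriples_le hY0 hZ0.le hX0.le
  rw [show Z * X * Y = X * Y * Z by ring] at h₂
  rw [show Y * Z * X = X * Y * Z by ring] at h₃
  calc ((productTriples X Y Z).ncard : ℝ)
      ≤ (lowThirdTriples X Y Z).ncard + (lowThirdTriples Z X Y).ncard +
        (lowThirdTriples Y Z X).ncard := by exact_mod_cast ncard_productTriples_le X Y Z
    _ ≤ 24 * (X * Y * Z) ^ ((1 : ℝ) / 2) := by linarith
end

section
/- Let ℓ, p, q be distinct primes such that q ≡ 8 (mod 9) and {ℓ mod 9, p mod 9} = {2, 5}. Then for every prime v there exist y₀, y₂, y₃ ∈ ℤ_v with y₀³ + ℓ + p·q·y₂³ + q·ℓ²·y₃³ = 0. -/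
/-! For `v ≠ 3`, a solution modulo `v` in which some term `c xᵢ³` has `c xᵢ ≢ 0` lifts by Hensel's
lemma in the variable `xᵢ`, the derivative `3 c xᵢ²` being a unit. Such a solution modulo `v`
comes from a cube root when cubing is bijective on `𝔽_v` (that is, `v ≢ 1 mod 3`, which covers
`v ∈ {ℓ, p, q}`), and otherwise from Cauchy–Davenport: each set `{c x³}` with `c ≠ 0` has at least
`(v + 2) / 3` elements, so three of them add up to all of `𝔽_v`.
For `v = 3` take `y₂ = 1`, `y₃ = -1`: the congruences give `ℓ + pq - qℓ² ≡ 1 mod 9`, and every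
integer `≡ 1 mod 9` is a `3`-adic cube. -/

open Polynomial Finset PadicInt
open scoped Pointwise

section

variable {v : ℕ} [Fact v.Prime]

theorem ZMod.natCast_ne_zero_of_prime_of_ne {n : ℕ} (hn : n.Prime) (h : v ≠ n) :
    (n : ZMod v) ≠ 0 := by
  rwa [Ne, ZMod.natCast_eq_zero_iff, Nat.prime_dvd_prime_iff_eq Fact.out hn]

theorem ZMod.exists_pow_three_eq (hv : v % 3 ≠ 1) (c : ZMod v) : ∃ x : ZMod v, x ^ 3 = c := by
  rcases eq_or_ne c 0 with rfl | hc
  · exact ⟨0, zero_pow three_ne_zero⟩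
  have hcop : (Nat.card (ZMod v)ˣ).Coprime 3 := by
    rw [Nat.card_eq_fintype_card, ZMod.card_units, Nat.coprime_comm,
      Nat.Prime.coprime_iff_not_dvd Nat.prime_three]
    have := (Fact.out : v.Prime).two_le
    omega
  obtain ⟨x, hx⟩ := hcop.pow_left_bijective.2 (Units.mk0 c hc)
  exact ⟨x, by simpa using congrArg Units.val hx⟩

theorem ZMod.card_image_mul_pow_three {c : ZMod v} (hc : c ≠ 0) :
    v + 2 ≤ 3 * #(univ.image fun x : ZMod v => c * x ^ 3) := by
  by_cases hv : v % 3 = 1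
  · have hdeg : 0 < (C c * X ^ 3 : (ZMod v)[X]).degree := by
      rw [degree_C_mul hc, degree_X_pow]; norm_num
    have h := FiniteField.card_image_polynomial_eval hdeg
    simp only [natDegree_C_mul hc, natDegree_X_pow, eval_mul, eval_C, eval_pow, eval_X,
      ZMod.card] at h
    omega
  · have himage : (univ.image fun x : ZMod v => c * x ^ 3) = univ := by
      refine eq_univ_of_forall fun d => mem_image.mpr ?_
      obtain ⟨x, hx⟩ := ZMod.exists_pow_three_eq hv (c⁻¹ * d)
      exact ⟨x, mem_univ x, by rw [hx, mul_inv_cancel_left₀ hc]⟩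
    have := (Fact.out : v.Prime).two_le
    rw [himage, card_univ, ZMod.card]
    omega

theorem ZMod.exists_pow_three_add_mul_pow_three_add_mul_pow_three_eq {c₁ c₂ : ZMod v}
    (h₁ : c₁ ≠ 0) (h₂ : c₂ ≠ 0) (d : ZMod v) :
    ∃ x y z : ZMod v, x ^ 3 + c₁ * y ^ 3 + c₂ * z ^ 3 = d := by
  set S : ZMod v → Finset (ZMod v) := fun c => univ.image fun x => c * x ^ 3
  have hS (c : ZMod v) : (S c).Nonempty := univ_nonempty.image _
  have hcard : #(S 1 + S c₁ + S c₂) = v := by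
    have h₀ : v + 2 ≤ 3 * #(S 1) := card_image_mul_pow_three one_ne_zero
    have h₁ : v + 2 ≤ 3 * #(S c₁) := card_image_mul_pow_three h₁
    have h₂ : v + 2 ≤ 3 * #(S c₂) := card_image_mul_pow_three h₂
    have hle := (card_le_univ (S 1 + S c₁ + S c₂)).trans_eq (ZMod.card v)
    have := ZMod.cauchy_davenport Fact.out (hS 1) (hS c₁)
    have := ZMod.cauchy_davenport Fact.out ((hS 1).add (hS c₁)) (hS c₂)
    omega
  have hd : d ∈ S 1 + S c₁ + S c₂ := by
    rw [eq_univ_of_card _ (hcard.trans (ZMod.card v).symm)]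
    exact mem_univ d
  obtain ⟨_, hxy, _, hz, rfl⟩ := mem_add.mp hd
  obtain ⟨_, hx, _, hy, rfl⟩ := mem_add.mp hxy
  obtain ⟨x, -, rfl⟩ := mem_image.mp hx
  obtain ⟨y, -, rfl⟩ := mem_image.mp hy
  obtain ⟨z, -, rfl⟩ := mem_image.mp hz
  exact ⟨x, y, z, by rw [one_mul]⟩


theorem PadicInt.toZMod_eq_zero_iff_norm_lt_one (x : ℤ_[v]) : toZMod x = 0 ↔ ‖x‖ < 1 := by
  rw [← RingHom.mem_ker, ker_toZMod, IsLocalRing.mem_maximalIdeal, mem_nonunits_iff,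
    not_isUnit_iff]

theorem PadicInt.norm_eq_one_of_toZMod_ne_zero {x : ℤ_[v]} (h : toZMod x ≠ 0) : ‖x‖ = 1 :=
  x.norm_le_one.antisymm (not_lt.mp (mt (toZMod_eq_zero_iff_norm_lt_one x).mpr h))

theorem PadicInt.exists_mul_pow_three_add_eq_zero {u b : ℤ_[v]} (a : ℤ_[v])
    (h : ‖u * a ^ 3 + b‖ < ‖3 * u * a ^ 2‖ ^ 2) : ∃ z : ℤ_[v], u * z ^ 3 + b = 0 := by
  obtain ⟨z, hz, -⟩ := hensels_lemma (F := C u * X ^ 3 + C b) (a := a) <| by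
    convert h using 3 <;> simp; ring
  exact ⟨z, by simpa using hz⟩

theorem PadicInt.exists_mul_pow_three_add_eq_zero_of_toZMod (hv : v ≠ 3) {u b : ℤ_[v]}
    {x : ZMod v} (hx : toZMod u * x ≠ 0) (h : toZMod u * x ^ 3 + toZMod b = 0) :
    ∃ z : ℤ_[v], u * z ^ 3 + b = 0 := by
  have hx' : toZMod (x.val : ℤ_[v]) = x := by simp
  have h3 : (3 : ZMod v) ≠ 0 := by
    exact_mod_cast ZMod.natCast_ne_zero_of_prime_of_ne Nat.prime_three hv
  refine exists_mul_pow_three_add_eq_zero (x.val : ℤ_[v]) ?_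
  obtain ⟨hu, hx0⟩ := mul_ne_zero_iff.mp hx
  have hderiv : toZMod (3 * u * (x.val : ℤ_[v]) ^ 2) ≠ 0 := by
    rw [map_mul, map_mul, map_pow, map_ofNat, hx']
    exact mul_ne_zero (mul_ne_zero h3 hu) (pow_ne_zero 2 hx0)
  rw [norm_eq_one_of_toZMod_ne_zero hderiv, one_pow, ← toZMod_eq_zero_iff_norm_lt_one]
  simpa [hx'] using h

theorem PadicInt.exists_diagonal_cubic_eq_zero (hv : v ≠ 3)
    (c₀ c₁ c₂ d : ℤ_[v]) {x₀ x₁ x₂ : ZMod v}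
    (h : toZMod c₀ * x₀ ^ 3 + toZMod c₁ * x₁ ^ 3 + toZMod c₂ * x₂ ^ 3 + toZMod d = 0)
    (hx : toZMod c₀ * x₀ ≠ 0 ∨ toZMod c₁ * x₁ ≠ 0 ∨ toZMod c₂ * x₂ ≠ 0) :
    ∃ y₀ y₁ y₂ : ℤ_[v], c₀ * y₀ ^ 3 + c₁ * y₁ ^ 3 + c₂ * y₂ ^ 3 + d = 0 := by
  let L (x : ZMod v) : ℤ_[v] := x.val
  have hL (x : ZMod v) : toZMod (L x) = x := by simp [L]
  rcases hx with hx | hx | hx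
  · obtain ⟨y, hy⟩ := exists_mul_pow_three_add_eq_zero_of_toZMod hv
      (b := c₁ * L x₁ ^ 3 + c₂ * L x₂ ^ 3 + d) hx
      (by simp only [map_add, map_mul, map_pow, hL]; linear_combination h)
    exact ⟨y, L x₁, L x₂, by linear_combination hy⟩
  · obtain ⟨y, hy⟩ := exists_mul_pow_three_add_eq_zero_of_toZMod hv
      (b := c₀ * L x₀ ^ 3 + c₂ * L x₂ ^ 3 + d) hx
      (by simp only [map_add, map_mul, map_pow, hL]; linear_combination h)
    exact ⟨L x₀, y, L x₂, by linear_combination hy⟩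
  · obtain ⟨y, hy⟩ := exists_mul_pow_three_add_eq_zero_of_toZMod hv
      (b := c₀ * L x₀ ^ 3 + c₁ * L x₁ ^ 3 + d) hx
      (by simp only [map_add, map_mul, map_pow, hL]; linear_combination h)
    exact ⟨L x₀, L x₁, y, by linear_combination hy⟩

theorem PadicInt.exists_pow_three_eq_of_modEq_one {n : ℤ} (h : n ≡ 1 [ZMOD 9]) :
    ∃ z : ℤ_[3], z ^ 3 = n := by
  obtain ⟨k, hk⟩ := h.symm.dvd
  -- `(1 + 3k)³ ≡ 1 + 9k = n (mod 27)`, and `1 + 3k` is a unit.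
  set a : ℤ_[3] := ((1 + 3 * k : ℤ) : ℤ_[3])
  have h3 : ‖(3 : ℤ_[3])‖ = 3⁻¹ := by exact_mod_cast norm_p (p := 3)
  have ha : ‖a‖ = 1 := by
    refine a.norm_le_one.antisymm (not_lt.mp ?_)
    rw [norm_int_lt_one_iff_dvd]
    omega
  have hval : 1 * a ^ 3 + -(n : ℤ_[3]) = 3 ^ 3 * ((k ^ 2 + k ^ 3 : ℤ) : ℤ_[3]) := by
    push_cast [a, show n = 1 + 9 * k by omega]
    ring
  obtain ⟨z, hz⟩ := exists_mul_pow_three_add_eq_zero (u := 1) (b := -(n : ℤ_[3])) a <| by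
    rw [hval, norm_mul, norm_mul, norm_mul, norm_pow, norm_pow, h3, ha, norm_one]
    calc (3 : ℝ)⁻¹ ^ 3 * ‖((k ^ 2 + k ^ 3 : ℤ) : ℤ_[3])‖ ≤ 3⁻¹ ^ 3 :=
          mul_le_of_le_one_right (by positivity) (norm_le_one _)
      _ < (3⁻¹ * 1 * 1 ^ 2) ^ 2 := by norm_num
  exact ⟨z, by linear_combination hz⟩

theorem cubic_constant_modEq_one {ℓ p q : ℤ} (hq : q % 9 = 8)
    (h : (ℓ % 9 = 2 ∧ p % 9 = 5) ∨ (ℓ % 9 = 5 ∧ p % 9 = 2)) :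
    ℓ + p * q - q * ℓ ^ 2 ≡ 1 [ZMOD 9] := by
  have e : ℓ + p * q - q * ℓ ^ 2 ≡ ℓ % 9 + p % 9 * (q % 9) - q % 9 * (ℓ % 9) ^ 2 [ZMOD 9] := by
    gcongr <;> exact (Int.mod_modEq _ _).symm
  rcases h with ⟨hℓ, hp⟩ | ⟨hℓ, hp⟩ <;> rw [hℓ, hp, hq] at e <;> exact e

theorem exists_zmod_cubic_eq_zero {ℓ p q : ℕ} (hℓ : ℓ.Prime) (hp : p.Prime)
    (hq : q.Prime) (hℓp : ℓ ≠ p) (hℓq : ℓ ≠ q) (hℓ3 : ℓ % 3 = 2) (hp3 : p % 3 = 2)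
    (hq3 : q % 3 = 2) :
    ∃ x₀ x₂ x₃ : ZMod v, x₀ ^ 3 + ℓ + p * q * x₂ ^ 3 + q * ℓ ^ 2 * x₃ ^ 3 = 0 ∧
      (x₀ ≠ 0 ∨ p * q * x₂ ≠ 0 ∨ q * ℓ ^ 2 * x₃ ≠ 0) := by
  by_cases hvℓ : v = ℓ
  · subst hvℓ
    have hpq : (p * q : ZMod v) ≠ 0 := mul_ne_zero
      (ZMod.natCast_ne_zero_of_prime_of_ne hp hℓp) (ZMod.natCast_ne_zero_of_prime_of_ne hq hℓq)
    obtain ⟨w, hw⟩ := ZMod.exists_pow_three_eq (by omega) (-(p * q) : ZMod v)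
    exact ⟨w, 1, 0, by rw [ZMod.natCast_self, hw]; ring, .inr (.inl (by rwa [mul_one]))⟩
  have hℓ0 := ZMod.natCast_ne_zero_of_prime_of_ne hℓ hvℓ
  suffices ∃ x₀ x₂ x₃ : ZMod v, x₀ ^ 3 + p * q * x₂ ^ 3 + q * ℓ ^ 2 * x₃ ^ 3 = -ℓ by
    obtain ⟨x₀, x₂, x₃, h⟩ := this
    refine ⟨x₀, x₂, x₃, by linear_combination h, ?_⟩
    by_contra! h0
    exact hℓ0 (by linear_combination h - x₀ ^ 2 * h0.1 - x₂ ^ 2 * h0.2.1 - x₃ ^ 2 * h0.2.2)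
  by_cases hv : v % 3 = 1
  · have hvp : v ≠ p := by rintro rfl; omega
    have hvq : v ≠ q := by rintro rfl; omega
    have hp0 := ZMod.natCast_ne_zero_of_prime_of_ne hp hvp
    have hq0 := ZMod.natCast_ne_zero_of_prime_of_ne hq hvq
    exact ZMod.exists_pow_three_add_mul_pow_three_add_mul_pow_three_eq (mul_ne_zero hp0 hq0)
      (mul_ne_zero hq0 (pow_ne_zero 2 hℓ0)) _
  · obtain ⟨w, hw⟩ := ZMod.exists_pow_three_eq hv (-ℓ)
    exact ⟨w, 0, 0, by rw [hw]; ring⟩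

end

theorem stmt_14_general (ℓ p q : ℕ) (hℓ : ℓ.Prime) (hp : p.Prime) (hq : q.Prime)
    (hℓp : ℓ ≠ p) (hℓq : ℓ ≠ q) (hq9 : q % 9 = 8)
    (h9 : (ℓ % 9 = 2 ∧ p % 9 = 5) ∨ (ℓ % 9 = 5 ∧ p % 9 = 2)) :
    ∀ (v : ℕ) [Fact v.Prime],
      ∃ y₀ y₂ y₃ : ℤ_[v],
        y₀ ^ 3 + (ℓ : ℤ_[v]) + (p : ℤ_[v]) * (q : ℤ_[v]) * y₂ ^ 3 +
          (q : ℤ_[v]) * (ℓ : ℤ_[v]) ^ 2 * y₃ ^ 3 = 0 := by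
  intro v _
  rcases eq_or_ne v 3 with rfl | hv
  · obtain ⟨z, hz⟩ := exists_pow_three_eq_of_modEq_one
      (cubic_constant_modEq_one (ℓ := ℓ) (p := p) (q := q) (by omega) (by omega))
    exact ⟨-z, 1, -1, by push_cast at hz; linear_combination -hz⟩
  obtain ⟨x₀, x₂, x₃, hx, hne⟩ := exists_zmod_cubic_eq_zero (v := v) hℓ hp hq hℓp hℓq
    (by omega) (by omega) (by omega)
  obtain ⟨y₀, y₂, y₃, hy⟩ := exists_diagonal_cubic_eq_zero hv 1 (p * q) (q * ℓ ^ 2) ℓ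
    (x₀ := x₀) (x₁ := x₂) (x₂ := x₃)
    (by simp only [map_one, map_mul, map_pow, map_natCast]; linear_combination hx)
    (by simpa only [map_one, one_mul, map_mul, map_pow, map_natCast] using hne)
  exact ⟨y₀, y₂, y₃, by linear_combination hy⟩

/-- Let `ℓ, p, q` be distinct primes with `q ≡ 8 (mod 9)` and
`{ℓ mod 9, p mod 9} = {2, 5}`. Then for every prime `v` the equation
`y₀³ + ℓ + pq·y₂³ + qℓ²·y₃³ = 0` has a solution in `ℤ_v`. -/
theorem stmt_14 (ℓ p q : ℕ) (hℓ : ℓ.Prime) (hp : p.Prime) (hq : q.Prime)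
    (hℓp : ℓ ≠ p) (hℓq : ℓ ≠ q) (hpq : p ≠ q) (hq9 : q % 9 = 8)
    (h9 : (ℓ % 9 = 2 ∧ p % 9 = 5) ∨ (ℓ % 9 = 5 ∧ p % 9 = 2)) :
    ∀ (v : ℕ) [Fact v.Prime],
      ∃ y₀ y₂ y₃ : ℤ_[v],
        y₀ ^ 3 + (ℓ : ℤ_[v]) + (p : ℤ_[v]) * (q : ℤ_[v]) * y₂ ^ 3 +
          (q : ℤ_[v]) * (ℓ : ℤ_[v]) ^ 2 * y₃ ^ 3 = 0 :=
  stmt_14_general ℓ p q hℓ hp hq hℓp hℓq hq9 h9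
end

section
/- Let K be a number field in which the polynomial X² + X + 1 has no root, let a ∈ K be nonzero, and let E be the elliptic curve over K with Weierstrass equation y² = x³ − 432·a². Consider the group E(K̄) of points of E over an algebraic closure K̄ of K, with the absolute Galois group Aut(K̄/K) acting on points coordinatewise. If a is a cube in K^×, then there are exactly two subgroups of E(K̄) of order 3 that are stable under the action of Aut(K̄/K); if a is not a cube in K^×, there is exactly one such subgroup. -/
/-!
A subgroup of order 3 is `{0, P, -P}` for a point `P = (x, y)` with `Ψ₃(x) = 0`. Since
`σ P = ± P` exactly when `σ x = x`, it is Galois-stable iff `x ∈ K`; conversely `x` determines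
the subgroup and every root of `Ψ₃` lifts to a point over `K̄`. So the Galois-stable subgroups of
order 3 correspond to the roots of `Ψ₃` in `K`. For `y² = x³ - 432a²` we have
`Ψ₃ = 3x(x³ - 12³a²)`, and as `K` has no primitive cube root of unity, `x³ = 12³a²` has the single
root `12c²` in `K` when `a = c³`, and none when `a` is not a cube.
-/

open WeierstrassCurve
open scoped WeierstrassCurve.Affine
open scoped Classical

namespace AddSubgroup

variable {G : Type*} [AddCommGroup G] {P Q : G}

theorem natCard_eq_prime_iff_exists_zmultiples {p : ℕ} [Fact p.Prime] {S : AddSubgroup G} :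
    Nat.card S = p ↔ ∃ P, addOrderOf P = p ∧ S = zmultiples P := by
  refine ⟨fun hS ↦ ?_, ?_⟩
  · have : Finite S := Nat.finite_of_card_ne_zero (hS ▸ (Fact.out : p.Prime).ne_zero)
    obtain ⟨P, hPS, hP0⟩ : ∃ P ∈ S, P ≠ 0 := by
      by_contra! h
      rw [(eq_bot_iff_forall S).mpr h, card_bot] at hS
      exact (Fact.out : p.Prime).ne_one hS.symm
    have hP : addOrderOf P = p := by
      have := addOrderOf_dvd_natCard S hPS
      rw [hS, Nat.dvd_prime Fact.out, AddMonoid.addOrderOf_eq_one_iff] at this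
      exact this.resolve_left hP0
    refine ⟨P, hP, (eq_of_le_of_card_ge (zmultiples_le_of_mem hPS) ?_).symm⟩
    rw [hS, Nat.card_zmultiples, hP]
  · rintro ⟨P, hP, rfl⟩
    rw [Nat.card_zmultiples, hP]

theorem mem_zmultiples_iff_of_addOrderOf_eq_three (hP : addOrderOf P = 3) :
    Q ∈ zmultiples P ↔ Q = 0 ∨ Q = P ∨ Q = -P := by
  have hneg : 2 • P = -P := by
    have h3 : 3 • P = 0 := hP ▸ addOrderOf_nsmul_eq_zero P
    exact eq_neg_of_add_eq_zero_left (by rwa [succ_nsmul] at h3)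
  have hfin : IsOfFinAddOrder P := addOrderOf_pos_iff.mp (by omega)
  rw [hfin.mem_zmultiples_iff_mem_range_addOrderOf, hP, Finset.mem_image]
  constructor
  · rintro ⟨n, hn, rfl⟩
    rw [Finset.mem_range] at hn
    interval_cases n <;> simp [hneg]
  · rintro (rfl | rfl | rfl)
    exacts [⟨0, by simp⟩, ⟨1, by simp⟩, ⟨2, by simp [hneg]⟩]

theorem zmultiples_eq_zmultiples_iff_of_addOrderOf_eq_three (hP : addOrderOf P = 3) :
    zmultiples P = zmultiples Q ↔ P = Q ∨ P = -Q := by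
  refine ⟨fun h ↦ ?_, ?_⟩
  · have hQ : Q ∈ zmultiples P := h ▸ mem_zmultiples Q
    rcases (mem_zmultiples_iff_of_addOrderOf_eq_three hP).mp hQ with rfl | rfl | rfl
    · rw [zmultiples_zero_eq_bot, zmultiples_eq_bot] at h
      simp [h] at hP
    · exact .inl rfl
    · exact .inr (neg_neg P).symm
  · rintro (rfl | rfl)
    · rfl
    · exact zmultiples_neg

end AddSubgroup

namespace WeierstrassCurve

variable {R S : Type*} [CommRing R] [CommRing S] (W : WeierstrassCurve R)

instance isShortNF_map [W.IsShortNF] (f : R →+* S) : (W.map f).IsShortNF :=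
  ⟨by simp, by simp, by simp⟩

instance isShortNF_baseChange [W.IsShortNF] [Algebra R S] : (W⁄S).IsShortNF :=
  W.isShortNF_map _

instance isElliptic_baseChange [W.IsElliptic] [Algebra R S] : (W⁄S).IsElliptic :=
  inferInstanceAs (W.map _).IsElliptic

theorem eval_Ψ₃_of_isShortNF [W.IsShortNF] (x : R) :
    W.Ψ₃.eval x = 3 * x ^ 4 + 6 * W.a₄ * x ^ 2 + 12 * W.a₆ * x - W.a₄ ^ 2 := by
  simp only [Ψ₃, b₂_of_isShortNF, b₄_of_isShortNF, b₆_of_isShortNF, b₈_of_isShortNF,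
    Polynomial.eval_add, Polynomial.eval_mul, Polynomial.eval_ofNat, Polynomial.eval_pow,
    Polynomial.eval_X, Polynomial.eval_C]
  ring

theorem eval_baseChange_Ψ₃ [Algebra R S] (ξ : R) :
    (W⁄S).Ψ₃.eval (algebraMap R S ξ) = algebraMap R S (W.Ψ₃.eval ξ) := by
  rw [show W⁄S = W.map (algebraMap R S) from rfl, map_Ψ₃, Polynomial.eval_map,
    Polynomial.eval₂_at_apply]

namespace Affine

section ShortNF

variable {F : Type*} [Field F] {W : Affine F} [W.IsShortNF] {x y : F}

theorem exists_nonsingular [IsAlgClosed F] [W.IsElliptic] (x : F) : ∃ y, W.Nonsingular x y := by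
  obtain ⟨y, hy⟩ := IsAlgClosed.exists_pow_nat_eq (x ^ 3 + W.a₄ * x + W.a₆) two_pos
  refine ⟨y, equation_iff_nonsingular.mp ?_⟩
  rw [equation_iff, a₁_of_isShortNF, a₂_of_isShortNF, a₃_of_isShortNF]
  linear_combination hy

theorem eval_Ψ₃_ne_zero_of_Y_eq (h : W.Nonsingular x y) (hy : y = W.negY x y) :
    W.Ψ₃.eval x ≠ 0 := by
  have hxy := (nonsingular_iff x y).mp h
  simp only [a₁_of_isShortNF, a₂_of_isShortNF, a₃_of_isShortNF, equation_iff] at hxy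
  have hy2 : 2 * y = 0 := by
    simp only [negY, a₁_of_isShortNF, a₃_of_isShortNF] at hy
    linear_combination hy
  have hslope : 3 * x ^ 2 + W.a₄ ≠ 0 := by
    rcases hxy.2 with hX | hY
    · exact fun h0 ↦ hX (by linear_combination -h0)
    · exact absurd (by linear_combination hy2) hY
  intro hΨ
  refine hslope (pow_eq_zero_iff two_ne_zero |>.mp ?_)
  linear_combination 6 * x * y * hy2 - 12 * x * hxy.1 + W.eval_Ψ₃_of_isShortNF x - hΨ

variable [DecidableEq F]

theorem addX_sub_mul_eq_neg_eval_Ψ₃ (h : W.Nonsingular x y) (hy : y ≠ W.negY x y) :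
    (W.addX x x (W.slope x x y y) - x) * (2 * y) ^ 2 = -W.Ψ₃.eval x := by
  have hxy := ((nonsingular_iff x y).mp h).1
  simp only [a₁_of_isShortNF, a₂_of_isShortNF, a₃_of_isShortNF, equation_iff] at hxy
  have hslope : W.slope x x y y * (2 * y) = 3 * x ^ 2 + W.a₄ := by
    rw [slope_of_Y_ne rfl hy, div_mul_eq_mul_div, div_eq_iff (sub_ne_zero.mpr hy)]
    simp only [negY, a₁_of_isShortNF, a₂_of_isShortNF, a₃_of_isShortNF]
    ring
  simp only [addX, a₁_of_isShortNF, a₂_of_isShortNF]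
  linear_combination (W.slope x x y y * (2 * y) + 3 * x ^ 2 + W.a₄) * hslope - 12 * x * hxy +
    W.eval_Ψ₃_of_isShortNF x

theorem Point.addOrderOf_some_eq_three_iff (h : W.Nonsingular x y) :
    addOrderOf (some x y h) = 3 ↔ W.Ψ₃.eval x = 0 := by
  rw [addOrderOf_eq_prime_iff, and_iff_left (some_ne_zero h), succ_nsmul, two_nsmul]
  by_cases hy : y = W.negY x y
  · rw [add_self_of_Y_eq hy, zero_add]
    exact iff_of_false (some_ne_zero h) (eval_Ψ₃_ne_zero_of_Y_eq h hy)
  have h2y : 2 * y ≠ 0 := fun h0 ↦ hy <| by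
    simp only [negY, a₁_of_isShortNF, a₃_of_isShortNF]
    linear_combination h0
  rw [← neg_eq_zero (a := W.Ψ₃.eval x), ← addX_sub_mul_eq_neg_eval_Ψ₃ h hy, mul_eq_zero,
    or_iff_left (pow_ne_zero 2 h2y), sub_eq_zero]
  obtain ⟨h₂, hdouble⟩ : ∃ h₂, some x y h + some x y h = some _ _ h₂ := ⟨_, add_self_of_Y_ne hy⟩
  constructor
  · intro h3
    rw [hdouble, ← eq_neg_iff_add_eq_zero, neg_some] at h3
    exact (some.inj h3).1
  · intro hx
    rcases (X_eq_iff (h₁ := h₂) (h₂ := h)).mp hx with h' | h' <;> rw [← hdouble] at h'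
    · exact absurd (add_eq_left.mp h') (some_ne_zero h)
    · rw [h', neg_add_cancel]

end ShortNF

namespace Point

variable {K L : Type*} [Field K] [Field L] [Algebra K L] [DecidableEq L] {W : WeierstrassCurve K}

theorem map_some_eq_or_eq_neg_iff (σ : L ≃ₐ[K] L) {x y : L} (h : (W.toAffine⁄L).Nonsingular x y) :
    (map (W' := W) σ.toAlgHom (some x y h) = some x y h ∨
      map (W' := W) σ.toAlgHom (some x y h) = -some x y h) ↔ σ x = x := by
  rw [map_some, ← X_eq_iff]
  rfl

theorem galoisStable_zmultiples_iff [IsGalois K L] {x y : L} (h : (W.toAffine⁄L).Nonsingular x y)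
    (h3 : addOrderOf (some x y h) = 3) :
    (∀ σ : L ≃ₐ[K] L, ∀ P ∈ AddSubgroup.zmultiples (some x y h),
      map (W' := W) σ.toAlgHom P ∈ AddSubgroup.zmultiples (some x y h)) ↔
      x ∈ Set.range (algebraMap K L) := by
  rw [InfiniteGalois.mem_range_algebraMap_iff_fixed]
  refine forall_congr' fun σ ↦ ?_
  have hσ0 : map (W' := W) σ.toAlgHom (some x y h) ≠ 0 := by
    rw [map_some]
    exact some_ne_zero _
  calc _ ↔ map (W' := W) σ.toAlgHom (some x y h) ∈ AddSubgroup.zmultiples (some x y h) :=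
        AddSubgroup.zmultiples_le (H := (AddSubgroup.zmultiples _).comap _)
    _ ↔ _ := by
      rw [AddSubgroup.mem_zmultiples_iff_of_addOrderOf_eq_three h3, or_iff_right hσ0,
        map_some_eq_or_eq_neg_iff]

theorem ncard_galoisStable_card_three_eq_ncard_roots_Ψ₃ [IsAlgClosed L] [IsGalois K L]
    (W : WeierstrassCurve K) [W.IsShortNF] [W.IsElliptic] :
    {S : AddSubgroup (W.toAffine⁄L).Point | Nat.card S = 3 ∧
        ∀ σ : L ≃ₐ[K] L, ∀ P ∈ S, map (W' := W) σ.toAlgHom P ∈ S}.ncard =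
      {ξ : K | W.Ψ₃.eval ξ = 0}.ncard := by
  choose y hy using fun ξ : K ↦ exists_nonsingular (W := W.toAffine⁄L) (algebraMap K L ξ)
  have hy3 (ξ : K) (hξ : W.Ψ₃.eval ξ = 0) : addOrderOf (some _ _ (hy ξ)) = 3 := by
    rw [addOrderOf_some_eq_three_iff, eval_baseChange_Ψ₃, hξ, _root_.map_zero]
  refine (Set.ncard_congr (fun ξ _ ↦ AddSubgroup.zmultiples (some _ _ (hy ξ))) ?_ ?_ ?_).symm
  · intro ξ hξ
    exact ⟨AddSubgroup.natCard_eq_prime_iff_exists_zmultiples.mpr ⟨_, hy3 ξ hξ, rfl⟩,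
      (galoisStable_zmultiples_iff _ (hy3 ξ hξ)).mpr ⟨ξ, rfl⟩⟩
  · intro ξ η hξ _ heq
    rw [AddSubgroup.zmultiples_eq_zmultiples_iff_of_addOrderOf_eq_three (hy3 ξ hξ),
      ← X_eq_iff] at heq
    exact (algebraMap K L).injective heq
  · rintro S ⟨hS, hstab⟩
    obtain ⟨_ | ⟨x, y', h⟩, hP, rfl⟩ := AddSubgroup.natCard_eq_prime_iff_exists_zmultiples.mp hS
    · simp [← zero_def] at hP
    obtain ⟨ξ, rfl⟩ := (galoisStable_zmultiples_iff h hP).mp hstab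
    have hξ : W.Ψ₃.eval ξ = 0 := by
      apply (algebraMap K L).injective
      rw [← eval_baseChange_Ψ₃, _root_.map_zero, ← addOrderOf_some_eq_three_iff h]
      exact hP
    refine ⟨ξ, hξ, ?_⟩
    rw [AddSubgroup.zmultiples_eq_zmultiples_iff_of_addOrderOf_eq_three (hy3 ξ hξ), ← X_eq_iff]

end Point

end Affine

end WeierstrassCurve

section CubeRoots

variable {K : Type*} [Field K]

theorem pow_three_injective (hK : ∀ x : K, x ^ 2 + x + 1 ≠ 0) :
    Function.Injective fun u : K ↦ u ^ 3 := by
  intro u v (h : u ^ 3 = v ^ 3)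
  rcases eq_or_ne v 0 with rfl | hv
  · simpa using h
  · have hfac : (u - v) * ((u / v) ^ 2 + u / v + 1) = 0 := by
      field_simp
      linear_combination h
    exact sub_eq_zero.mp ((mul_eq_zero.mp hfac).resolve_right (hK _))

theorem setOf_pow_three_eq_mul_sq_cube (hK : ∀ x : K, x ^ 2 + x + 1 ≠ 0) (c : K) :
    {ξ : K | ξ ^ 3 = 1728 * (c ^ 3) ^ 2} = {12 * c ^ 2} :=
  Set.ext fun ξ ↦ (pow_three_injective hK).eq_iff' (by ring)

theorem setOf_pow_three_eq_mul_sq_eq_empty [CharZero K] {a : K} (ha : a ≠ 0)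
    (hcube : ¬∃ c : K, c ^ 3 = a) : {ξ : K | ξ ^ 3 = 1728 * a ^ 2} = ∅ := by
  refine Set.eq_empty_of_forall_notMem fun ξ (hξ : ξ ^ 3 = 1728 * a ^ 2) ↦ ?_
  have hξ0 : ξ ≠ 0 := by
    rintro rfl
    simp_all
  -- `(12a / ξ)³ = 1728 a³ / ξ³ = a`
  exact hcube ⟨12 * a / ξ, by field_simp; linear_combination -hξ⟩

end CubeRoots

/-- Let `K` be a number field in which `X² + X + 1` has no root,
`a ∈ K` nonzero, and `E : y² = x³ − 432a²`. If `a` is a cube in `K`, then `E(K̄)`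
has exactly two Galois-stable subgroups of order 3; otherwise exactly one. -/
theorem stmt_15 (K : Type*) [Field K] [NumberField K]
    (hK : ∀ x : K, x ^ 2 + x + 1 ≠ 0) (a : K) (ha : a ≠ 0)
    (W : WeierstrassCurve K)
    (hW : W = { a₁ := 0, a₂ := 0, a₃ := 0, a₄ := 0, a₆ := -432 * a ^ 2 }) :
    ((∃ c : K, c ^ 3 = a) →
      {S : AddSubgroup (W.toAffine⁄(AlgebraicClosure K)).Point | Nat.card S = 3 ∧
        ∀ σ : AlgebraicClosure K ≃ₐ[K] AlgebraicClosure K, ∀ P ∈ S,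
          WeierstrassCurve.Affine.Point.map (W' := W) σ.toAlgHom P ∈ S}.ncard = 2) ∧
    ((¬ ∃ c : K, c ^ 3 = a) →
      {S : AddSubgroup (W.toAffine⁄(AlgebraicClosure K)).Point | Nat.card S = 3 ∧
        ∀ σ : AlgebraicClosure K ≃ₐ[K] AlgebraicClosure K, ∀ P ∈ S,
          WeierstrassCurve.Affine.Point.map (W' := W) σ.toAlgHom P ∈ S}.ncard = 1) := by
  have : W.IsShortNF := ⟨by rw [hW], by rw [hW], by rw [hW]⟩
  have : W.IsElliptic := by
    rw [isElliptic_iff, isUnit_iff_ne_zero, Δ_of_isShortNF, hW]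
    simpa using ha
  have hroots : {ξ : K | W.Ψ₃.eval ξ = 0} = insert 0 {ξ | ξ ^ 3 = 1728 * a ^ 2} := by
    ext ξ
    change W.Ψ₃.eval ξ = 0 ↔ ξ = 0 ∨ ξ ^ 3 = 1728 * a ^ 2
    rw [eval_Ψ₃_of_isShortNF, hW, ← sub_eq_zero (a := ξ ^ 3),
      show 3 * ξ ^ 4 + 6 * 0 * ξ ^ 2 + 12 * (-432 * a ^ 2) * ξ - 0 ^ 2 =
        3 * (ξ * (ξ ^ 3 - 1728 * a ^ 2)) by ring]
    simp
  rw [Affine.Point.ncard_galoisStable_card_three_eq_ncard_roots_Ψ₃, hroots]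
  refine ⟨?_, fun hcube ↦ ?_⟩
  · rintro ⟨c, rfl⟩
    have hc0 : 12 * c ^ 2 ≠ 0 := mul_ne_zero (by norm_num) (pow_ne_zero 2 (by simpa using ha))
    rw [setOf_pow_three_eq_mul_sq_cube hK, Set.ncard_pair hc0.symm]
  · rw [setOf_pow_three_eq_mul_sq_eq_empty ha hcube, insert_empty_eq, Set.ncard_singleton]
end

section
/- Let a₀, a₁, a₃ be integers with a₀ ≡ 2 (mod 9), a₁ ≡ 8 (mod 9) and a₃ ≡ 5 (mod 9). Then every (u₁, u₂, u₃) ∈ ℤ₃³ satisfying a₁·u₁³ + a₁·u₂³ + a₃·u₃³ = a₀ satisfies either u₁³ ≡ u₂³ ≡ 1 (mod 9) or u₁³ ≡ u₂³ ≡ −1 (mod 9). -/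
lemma zmod9_key : ∀ x y z : ZMod 9,
    8 * x ^ 3 + 8 * y ^ 3 + 5 * z ^ 3 = 2 →
      (x ^ 3 = 1 ∧ y ^ 3 = 1) ∨ (x ^ 3 = 8 ∧ y ^ 3 = 8) := by decide

lemma padic_dvd_of_toZMod (w : ℤ_[3]) (h : PadicInt.toZModPow 2 w = 0) :
    (9 : ℤ_[3]) ∣ w := by
  have : w ∈ RingHom.ker (PadicInt.toZModPow 2 : ℤ_[3] →+* ZMod (3 ^ 2)) := h
  rw [PadicInt.ker_toZModPow] at this
  rcases Ideal.mem_span_singleton.mp this with ⟨c, hc⟩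
  exact ⟨c, by push_cast at hc ⊢; rw [hc]; ring⟩

/-- If `a₀ ≡ 2`, `a₁ ≡ 8`, `a₃ ≡ 5 (mod 9)`, then every 3-adic integral
solution of `a₁u₁³ + a₁u₂³ + a₃u₃³ = a₀` satisfies `u₁³ ≡ u₂³ ≡ 1 (mod 9)` or
`u₁³ ≡ u₂³ ≡ −1 (mod 9)`. -/
theorem stmt_17 (a₀ a₁ a₃ : ℤ) (h₀ : a₀ % 9 = 2) (h₁ : a₁ % 9 = 8) (h₃ : a₃ % 9 = 5) :
    ∀ u₁ u₂ u₃ : ℤ_[3],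
      (a₁ : ℤ_[3]) * u₁ ^ 3 + (a₁ : ℤ_[3]) * u₂ ^ 3 + (a₃ : ℤ_[3]) * u₃ ^ 3 = (a₀ : ℤ_[3]) →
        ((9 : ℤ_[3]) ∣ u₁ ^ 3 - 1 ∧ (9 : ℤ_[3]) ∣ u₂ ^ 3 - 1) ∨
        ((9 : ℤ_[3]) ∣ u₁ ^ 3 + 1 ∧ (9 : ℤ_[3]) ∣ u₂ ^ 3 + 1) := by
  intro u₁ u₂ u₃ heq
  have heq' := congrArg (PadicInt.toZModPow (p := 3) 2) heq
  simp only [map_add, map_mul, map_pow, map_intCast] at heq'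
  have ca₁ : ((a₁ : ZMod (3 ^ 2))) = 8 := by
    have : (a₁ : ZMod 9) = ((8 : ℤ) : ZMod 9) := by
      rw [ZMod.intCast_eq_intCast_iff]; exact h₁
    simpa using this
  have ca₃ : ((a₃ : ZMod (3 ^ 2))) = 5 := by
    have : (a₃ : ZMod 9) = ((5 : ℤ) : ZMod 9) := by
      rw [ZMod.intCast_eq_intCast_iff]; exact h₃
    simpa using this
  have ca₀ : ((a₀ : ZMod (3 ^ 2))) = 2 := by
    have : (a₀ : ZMod 9) = ((2 : ℤ) : ZMod 9) := by
      rw [ZMod.intCast_eq_intCast_iff]; exact h₀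
    simpa using this
  rw [ca₁, ca₃, ca₀] at heq'
  have key : ∀ x y z : ZMod (3 ^ 2),
      8 * x ^ 3 + 8 * y ^ 3 + 5 * z ^ 3 = 2 →
        (x ^ 3 = 1 ∧ y ^ 3 = 1) ∨ (x ^ 3 = 8 ∧ y ^ 3 = 8) := zmod9_key
  rcases key _ _ _ heq' with ⟨hx, hy⟩ | ⟨hx, hy⟩
  · left
    constructor <;> apply padic_dvd_of_toZMod
    · rw [map_sub, map_pow, hx, map_one, sub_self]
    · rw [map_sub, map_pow, hy, map_one, sub_self]
  · right
    have h8 : ∀ u : ℤ_[3], PadicInt.toZModPow (p := 3) 2 u ^ 3 = 8 →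
        PadicInt.toZModPow (p := 3) 2 (u ^ 3 + 1) = 0 := by
      intro u hu
      rw [map_add, map_pow, hu, map_one]
      show (8 + 1 : ZMod 9) = 0
      decide
    constructor <;> apply padic_dvd_of_toZMod
    · exact h8 u₁ hx
    · exact h8 u₂ hy
end
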